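/- arXiv:1307.2418 — 7 statements merged into one kernel-verified Lean document; each statement's English description precedes it below -/
import Mathlib

section
/- A subset E of the real numbers is statistically upward compact if and only if E is bounded below. -/
def StatUpQC (x : ℕ → ℝ) : Prop :=
  ∀ ε > (0:ℝ), Filter.Tendsto
    (fun n => (((Finset.range n).filter (fun k => ε ≤ x k - x (k+1))).card : ℝ) / n)
    Filter.atTop (nhds 0)

def StatUpCompact (E : Set ℝ) : Prop :=
  ∀ x : ℕ → ℝ, (∀ n, x n ∈ E) → ∃ φ : ℕ → ℕ, StrictMono φ ∧ StatUpQC (x ∘ φ)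

/-!
If `E` is bounded below, a sequence in `E` has a monotone subsequence. A nondecreasing one never
steps down; a nonincreasing one converges, so its downward steps tend to `0` and only finitely
many of them reach a given `ε`. If `E` is unbounded below, choose points of `E` each lying more
than `1` below the previous one: every subsequence then steps down by at least `1` at every
index, so the set of such steps has density `1`.
-/

open Filter Finset Topology

section Density

variable (P : ℕ → Prop) [DecidablePred P]

theorem tendsto_card_filter_range_div_of_eventually_not (h : ∀ᶠ k in atTop, ¬ P k) :
    Tendsto (fun n : ℕ => (((range n).filter P).card : ℝ) / n) atTop (𝓝 0) := by
  obtain ⟨N, hN⟩ := eventually_atTop.1 h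
  have hcard : ∀ n, (((range n).filter P).card : ℝ) ≤ N := fun n => by
    have hsub : (range n).filter P ⊆ range N := fun k hk => by
      simp only [mem_filter, mem_range] at hk ⊢
      exact lt_of_not_ge fun hNk => hN k hNk hk.2
    exact_mod_cast (card_le_card hsub).trans_eq (card_range N)
  refine squeeze_zero (fun n => by positivity) (fun n => ?_)
    (tendsto_const_div_atTop_nhds_zero_nat (N : ℝ))
  exact div_le_div_of_nonneg_right (hcard n) n.cast_nonneg

theorem not_tendsto_card_filter_range_div_zero_of_forall (h : ∀ k, P k) :
    ¬ Tendsto (fun n : ℕ => (((range n).filter P).card : ℝ) / n) atTop (𝓝 0) := by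
  have hone : (fun n : ℕ => (((range n).filter P).card : ℝ) / n) =ᶠ[atTop] fun _ => 1 := by
    filter_upwards [eventually_gt_atTop 0] with n hn
    rw [filter_true_of_mem fun k _ => h k, card_range]
    exact div_self (Nat.cast_ne_zero.2 hn.ne')
  intro hzero
  exact zero_ne_one (tendsto_nhds_unique hzero (tendsto_const_nhds.congr' hone.symm))

end Density

theorem StatUpQC.of_eventually_sub_lt {x : ℕ → ℝ}
    (h : ∀ ε > 0, ∀ᶠ k in atTop, x k - x (k + 1) < ε) : StatUpQC x := fun ε hε =>
  tendsto_card_filter_range_div_of_eventually_not _ <| (h ε hε).mono fun _ hk => not_le.2 hk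

theorem Monotone.statUpQC {x : ℕ → ℝ} (hx : Monotone x) : StatUpQC x :=
  StatUpQC.of_eventually_sub_lt fun ε hε =>
    Eventually.of_forall fun k => by linarith [hx k.le_succ]

theorem Filter.Tendsto.statUpQC {x : ℕ → ℝ} {a : ℝ} (hx : Tendsto x atTop (𝓝 a)) :
    StatUpQC x := by
  have hstep : Tendsto (fun k => x k - x (k + 1)) atTop (𝓝 0) := by
    simpa using hx.sub (hx.comp (tendsto_add_atTop_nat 1))
  exact StatUpQC.of_eventually_sub_lt fun ε hε => hstep.eventually (eventually_lt_nhds hε)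

theorem not_statUpQC_of_forall_le_sub {x : ℕ → ℝ} {ε : ℝ} (hε : 0 < ε)
    (h : ∀ k, ε ≤ x k - x (k + 1)) : ¬ StatUpQC x := fun hx =>
  not_tendsto_card_filter_range_div_zero_of_forall _ h (hx ε hε)

theorem exists_strictMono_monotone_or_antitone_comp {α : Type*} [LinearOrder α] (x : ℕ → α) :
    ∃ φ : ℕ → ℕ, StrictMono φ ∧ (Monotone (x ∘ φ) ∨ Antitone (x ∘ φ)) := by
  obtain ⟨g, hle | hnle⟩ := exists_increasing_or_nonincreasing_subseq (· ≤ ·) x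
  · exact ⟨g, g.strictMono, .inl (monotone_nat_of_le_succ fun n => hle n (n + 1) n.lt_succ_self)⟩
  · exact ⟨g, g.strictMono, .inr (StrictAnti.antitone fun m n hmn => lt_of_not_ge (hnle m n hmn))⟩

theorem exists_seq_mem_le_sub_one_of_not_bddBelow {E : Set ℝ} (hE : ¬ BddBelow E) :
    ∃ x : ℕ → ℝ, (∀ n, x n ∈ E) ∧ ∀ m n, m < n → x n ≤ x m - 1 := by
  rw [not_bddBelow_iff] at hE
  choose f hfE hflt using hE
  let x : ℕ → ℝ := fun n => Nat.rec (f 0) (fun _ p => f (p - 1)) n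
  have hstep : ∀ n, x (n + 1) < x n - 1 := fun n => hflt _
  have hshifted : StrictAnti fun n => x n + n :=
    strictAnti_nat_of_succ_lt fun n => by push_cast; linarith [hstep n]
  refine ⟨x, fun n => n.casesOn (hfE 0) fun _ => hfE _, fun m n hmn => ?_⟩
  have hmn' : (m : ℝ) + 1 ≤ n := by exact_mod_cast hmn
  linarith [hshifted hmn]

theorem statUpCompact_iff_bddBelow (E : Set ℝ) :
    StatUpCompact E ↔ BddBelow E := by
  refine ⟨fun hE => ?_, fun ⟨b, hb⟩ x hx => ?_⟩
  · by_contra hunbdd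
    obtain ⟨x, hxE, hgap⟩ := exists_seq_mem_le_sub_one_of_not_bddBelow hunbdd
    obtain ⟨φ, hφ, hqc⟩ := hE x hxE
    refine not_statUpQC_of_forall_le_sub one_pos (fun k => ?_) hqc
    show 1 ≤ x (φ k) - x (φ (k + 1))
    linarith [hgap _ _ (hφ k.lt_succ_self)]
  · obtain ⟨φ, hφ, hmono | hanti⟩ := exists_strictMono_monotone_or_antitone_comp x
    · exact ⟨φ, hφ, hmono.statUpQC⟩
    · have hbdd : BddBelow (Set.range (x ∘ φ)) :=
        ⟨b, Set.forall_mem_range.2 fun k => hb (hx (φ k))⟩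
      exact ⟨φ, hφ, (tendsto_atTop_ciInf hanti hbdd).statUpQC⟩
end

section
/- Every statistically convergent sequence of reals is statistically upward half quasi-Cauchy. -/
def StatConv (x : ℕ → ℝ) (ℓ : ℝ) : Prop :=
  ∀ ε > (0:ℝ), Filter.Tendsto
    (fun n => (((Finset.range n).filter (fun k => ε ≤ |x k - ℓ|)).card : ℝ) / n)
    Filter.atTop (nhds 0)

/-!
If `x k - x (k+1) ≥ ε`, then `x k` or `x (k+1)` lies at distance at least `ε / 2` from `ℓ`.
So the indices of an upward jump of size `ε` lie in the union of the set where
`|x k - ℓ| ≥ ε / 2`, which has natural density zero, and its shift by one, which then has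
natural density zero too.
-/

open Filter Topology Finset

def DensityZero (p : ℕ → Prop) [DecidablePred p] : Prop :=
  Tendsto (fun n => (#{k ∈ range n | p k} : ℝ) / n) atTop (𝓝 0)

namespace DensityZero

variable {p q : ℕ → Prop} [DecidablePred p] [DecidablePred q]

theorem mono (hq : DensityZero q) (hpq : ∀ k, p k → q k) : DensityZero p := by
  refine squeeze_zero (fun n => by positivity) (fun n => ?_) hq
  gcongr
  exact hpq _

theorem or (hp : DensityZero p) (hq : DensityZero q) : DensityZero (fun k => p k ∨ q k) := by
  have hsum : Tendsto (fun n => (#{k ∈ range n | p k} : ℝ) / n + (#{k ∈ range n | q k} : ℝ) / n)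
      atTop (𝓝 0) := by
    simpa using hp.add hq
  refine squeeze_zero (fun n => by positivity) (fun n => ?_) hsum
  rw [← add_div, filter_or]
  gcongr
  exact_mod_cast card_union_le _ _

theorem comp_succ (hp : DensityZero p) : DensityZero (fun k => p (k + 1)) := by
  have hcard (n : ℕ) : #{k ∈ range n | p (k + 1)} ≤ #{k ∈ range (n + 1) | p k} := by
    refine card_le_card_of_injOn (· + 1) (fun k hk => ?_) (fun _ _ _ _ => Nat.succ_inj.mp)
    simp only [coe_filter, Set.mem_ofPred_eq, mem_range] at hk ⊢
    exact ⟨by omega, hk.2⟩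
  have hshift : Tendsto (fun n : ℕ => (#{k ∈ range (n + 1) | p k} : ℝ) / (n + 1)) atTop (𝓝 0) := by
    simpa using (tendsto_add_atTop_iff_nat 1).mpr hp
  have hratio : Tendsto (fun n : ℕ => ((n : ℝ) + 1) / n) atTop (𝓝 1) := by
    simpa using (tendsto_natCast_div_add_atTop (1 : ℝ)).inv₀ one_ne_zero
  refine squeeze_zero (fun n => by positivity) (fun n => ?_) (by simpa using hshift.mul hratio)
  rw [div_mul_div_cancel₀ (by positivity)]
  exact div_le_div_of_nonneg_right (by exact_mod_cast hcard n) n.cast_nonneg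

end DensityZero

theorem statConv_statUpQC (x : ℕ → ℝ) (ℓ : ℝ) (h : StatConv x ℓ) :
    StatUpQC x := by
  intro ε hε
  have hfar : DensityZero (fun k => ε / 2 ≤ |x k - ℓ|) := h (ε / 2) (half_pos hε)
  refine (hfar.or hfar.comp_succ).mono fun k hjump => ?_
  by_contra! hnear
  linarith [abs_lt.mp hnear.1, abs_lt.mp hnear.2]
end

section
/- If f : E → ℝ is statistically upward continuous on E ⊆ ℝ, then f is statistically continuous on E, i.e., f maps statistically convergent sequences of points in E with statistical limit in E to statistically convergent sequences with the corresponding limit. -/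
def StatUpCont (f : ℝ → ℝ) (E : Set ℝ) : Prop :=
  ∀ x : ℕ → ℝ, (∀ n, x n ∈ E) → StatUpQC x → StatUpQC (fun n => f (x n))

/-! Interleave `x` with the constant sequence `ℓ` to get `y = (ℓ, x 0, ℓ, x 1, …)`. The downward
steps of `y` are `ℓ - x m` and `x m - ℓ`, so `y` is statistically upward half quasi-Cauchy exactly
when `x → ℓ` statistically (halving or doubling indices preserves density zero). As `y` takes
values in `E`, `f ∘ y` is again statistically upward half quasi-Cauchy, and it is the interleaving
of `f ∘ x` with the constant `f ℓ`. -/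

open Finset Filter Topology

def HasDensityZero (P : ℕ → Prop) [DecidablePred P] : Prop :=
  Tendsto (fun n : ℕ => (#{k ∈ range n | P k} : ℝ) / n) atTop (𝓝 0)

namespace HasDensityZero

variable {P Q : ℕ → Prop} [DecidablePred P] [DecidablePred Q]

theorem mono (hQ : HasDensityZero Q) (h : ∀ k, P k → Q k) : HasDensityZero P := by
  refine squeeze_zero (fun n => by positivity) (fun n => ?_) hQ
  gcongr with k
  exact h k

theorem or (hP : HasDensityZero P) (hQ : HasDensityZero Q) :
    HasDensityZero fun k => P k ∨ Q k := by
  have hsum := hP.add hQ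
  rw [add_zero] at hsum
  refine squeeze_zero (fun n => by positivity) (fun n => ?_) hsum
  rw [← add_div, filter_or]
  gcongr
  exact_mod_cast card_union_le _ _

theorem comp_div (hP : HasDensityZero P) {a : ℕ} (ha : 0 < a) :
    HasDensityZero fun j => P (j / a) := by
  have hcount : ∀ n, #{j ∈ range n | P (j / a)} ≤ a * #{k ∈ range n | P k} := by
    intro n
    refine card_le_mul_card_image_of_maps_to (f := (· / a)) (fun j hj => ?_) a fun k _ => ?_
    · simp only [mem_filter, mem_range] at hj ⊢
      exact ⟨(Nat.div_le_self j a).trans_lt hj.1, hj.2⟩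
    · calc #{j ∈ {j ∈ range n | P (j / a)} | j / a = k}
          ≤ #(Ico (a * k) (a * k + a)) := card_le_card fun j hj => by
            simp only [mem_filter, mem_Ico] at hj ⊢
            rw [← hj.2]
            constructor
            · exact Nat.mul_div_le j a
            · exact Nat.lt_mul_div_succ j ha
        _ = a := by simp
  have hlim := hP.const_mul (a : ℝ)
  rw [mul_zero] at hlim
  refine squeeze_zero (fun n => by positivity) (fun n => ?_) hlim
  rw [← mul_div_assoc]
  gcongr
  exact_mod_cast hcount n

theorem comp_affine (hQ : HasDensityZero Q) {a : ℕ} (ha : 0 < a) (b : ℕ) :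
    HasDensityZero fun k => Q (a * k + b) := by
  have hcount : ∀ n, #{k ∈ range n | Q (a * k + b)} ≤ #{j ∈ range (a * n + b) | Q j} := by
    intro n
    refine card_le_card_of_injOn (fun k => a * k + b) (fun k hk => ?_) fun k _ l _ hkl => ?_
    · simp only [coe_filter, mem_range, Set.mem_ofPred_eq] at hk ⊢
      refine ⟨?_, hk.2⟩
      have := Nat.mul_lt_mul_of_pos_left hk.1 ha
      omega
    · simpa [ha.ne'] using hkl
  have hlin : Tendsto (fun n : ℕ => ((a * n + b : ℕ) : ℝ) / n) atTop (𝓝 a) := by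
    have hsum := (tendsto_const_nhds (x := (a : ℝ))).add
      (tendsto_const_div_atTop_nhds_zero_nat (b : ℝ))
    rw [add_zero] at hsum
    refine hsum.congr' ?_
    filter_upwards [eventually_ne_atTop 0] with n hn
    push_cast
    field_simp
  have hspread : Tendsto (fun n : ℕ => a * n + b) atTop atTop :=
    tendsto_atTop_mono (fun n => le_add_right (Nat.le_mul_of_pos_left n ha)) tendsto_id
  have hlim := (hQ.comp hspread).mul hlin
  rw [zero_mul] at hlim
  refine squeeze_zero' (Eventually.of_forall fun n => by positivity) ?_ hlim
  filter_upwards [eventually_ne_atTop 0] with n hn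
  have hden : ((a * n + b : ℕ) : ℝ) ≠ 0 := by positivity
  simp only [Function.comp_apply]
  rw [div_mul_div_cancel₀ hden]
  exact div_le_div_of_nonneg_right (by exact_mod_cast hcount n) n.cast_nonneg

end HasDensityZero

def interleave {α : Type*} (u v : ℕ → α) (j : ℕ) : α :=
  if Even j then u (j / 2) else v (j / 2)

section interleave

variable {α β : Type*} (u v : ℕ → α) (m : ℕ)

@[simp]
theorem interleave_two_mul : interleave u v (2 * m) = u m := by
  simp [interleave]

@[simp]
theorem interleave_two_mul_add_one : interleave u v (2 * m + 1) = v m := by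
  simp [interleave, Nat.add_div_of_dvd_right]

theorem interleave_two_mul_add_two : interleave u v (2 * m + 1 + 1) = u (m + 1) := by
  rw [show 2 * m + 1 + 1 = 2 * (m + 1) by ring, interleave_two_mul]

theorem comp_interleave (f : α → β) :
    (fun j => f (interleave u v j)) = interleave (f ∘ u) (f ∘ v) := by
  ext j
  simp only [interleave, apply_ite f, Function.comp_apply]

theorem interleave_mem {s : Set α} {u v : ℕ → α} (hu : ∀ m, u m ∈ s) (hv : ∀ m, v m ∈ s)
    (j : ℕ) : interleave u v j ∈ s := by
  unfold interleave
  split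
  exacts [hu _, hv _]

end interleave

theorem statUpQC_interleave_const_iff (x : ℕ → ℝ) (ℓ : ℝ) :
    StatUpQC (interleave (fun _ => ℓ) x) ↔ StatConv x ℓ := by
  constructor
  · intro h ε hε
    have hdown : HasDensityZero _ := h ε hε
    refine ((hdown.comp_affine two_pos 0).or (hdown.comp_affine two_pos 1)).mono fun m hm => ?_
    simp only [add_zero, interleave_two_mul, interleave_two_mul_add_one,
      interleave_two_mul_add_two]
    rcases le_abs'.1 hm with hm | hm
    · left; linarith
    · right; linarith
  · intro h ε hε
    have hfar : HasDensityZero _ := h ε hε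
    refine (hfar.comp_div two_pos).mono fun j hj => ?_
    obtain ⟨m, rfl | rfl⟩ := Nat.even_or_odd' j
    · simp only [interleave_two_mul, interleave_two_mul_add_one] at hj
      simp only [Nat.mul_div_cancel_left m two_pos]
      rw [abs_sub_comm]
      exact hj.trans (le_abs_self _)
    · simp only [interleave_two_mul_add_one, interleave_two_mul_add_two] at hj
      rw [show (2 * m + 1) / 2 = m by omega]
      exact hj.trans (le_abs_self _)

theorem statUpCont_statCont (f : ℝ → ℝ) (E : Set ℝ) (hf : StatUpCont f E)
    (x : ℕ → ℝ) (hx : ∀ n, x n ∈ E) (ℓ : ℝ) (hℓ : ℓ ∈ E) (hconv : StatConv x ℓ) :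
    StatConv (fun n => f (x n)) (f ℓ) := by
  have hy := hf _ (interleave_mem (fun _ => hℓ) hx)
    ((statUpQC_interleave_const_iff x ℓ).2 hconv)
  rw [comp_interleave] at hy
  exact (statUpQC_interleave_const_iff _ _).1 hy
end

section
/- If f : E → ℝ is statistically upward continuous on E ⊆ ℝ and K ⊆ E is statistically upward compact, then f(K) is statistically upward compact. -/
theorem statUpCont_image_compact (f : ℝ → ℝ) (E K : Set ℝ) (hKE : K ⊆ E)
    (hf : StatUpCont f E) (hK : StatUpCompact K) : StatUpCompact (f '' K) := by
  intro y hy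
  choose x hxK hfx using hy
  obtain rfl : (fun n => f (x n)) = y := funext hfx
  obtain ⟨φ, hφ, hqc⟩ := hK x hxK
  exact ⟨φ, hφ, hf (x ∘ φ) (fun n => hKE (hxK (φ n))) hqc⟩
end

section
/- If f : E → ℝ is statistically downward continuous on E ⊆ ℝ and K ⊆ E is statistically downward compact, then f(K) is statistically downward compact. -/
def StatDownQC (x : ℕ → ℝ) : Prop :=
  ∀ ε > (0:ℝ), Filter.Tendsto
    (fun n => (((Finset.range n).filter (fun k => ε ≤ x (k+1) - x k)).card : ℝ) / n)
    Filter.atTop (nhds 0)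

def StatDownCompact (E : Set ℝ) : Prop :=
  ∀ x : ℕ → ℝ, (∀ n, x n ∈ E) → ∃ φ : ℕ → ℕ, StrictMono φ ∧ StatDownQC (x ∘ φ)

def StatDownCont (f : ℝ → ℝ) (E : Set ℝ) : Prop :=
  ∀ x : ℕ → ℝ, (∀ n, x n ∈ E) → StatDownQC x → StatDownQC (fun n => f (x n))

theorem statDownCont_image_compact (f : ℝ → ℝ) (E K : Set ℝ) (hKE : K ⊆ E)
    (hf : StatDownCont f E) (hK : StatDownCompact K) : StatDownCompact (f '' K) := by
  intro y hy
  choose x hxK hfxy using hy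
  obtain ⟨φ, hφ, hxφ⟩ := hK x hxK
  have hyφ : y ∘ φ = fun n => f (x (φ n)) := funext fun n => (hfxy (φ n)).symm
  exact ⟨φ, hφ, hyφ ▸ hf (x ∘ φ) (fun n => hKE (hxK (φ n))) hxφ⟩
end

section
/- If (f_n) is a sequence of statistically upward continuous functions on E ⊆ ℝ converging uniformly to f on E, then f is statistically upward continuous on E. -/
/-! If `|f - g| < ε/3` on `E`, every upward jump of size at least `ε` of `g` along a sequence
in `E` is an upward jump of size at least `ε/3` of `f`, so the jumps of `g` have density zero
as soon as those of `f` do. -/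

theorem StatUpQC.tendsto_of_drop_imp {y z : ℕ → ℝ} (hz : StatUpQC z) {ε δ : ℝ} (hδ : 0 < δ)
    (himp : ∀ k, ε ≤ y k - y (k + 1) → δ ≤ z k - z (k + 1)) :
    Filter.Tendsto
      (fun n => (((Finset.range n).filter (fun k => ε ≤ y k - y (k+1))).card : ℝ) / n)
      Filter.atTop (nhds 0) := by
  refine squeeze_zero (fun n => by positivity) (fun n => ?_) (hz δ hδ)
  gcongr ?_ / _
  exact Nat.cast_le.mpr (Finset.card_le_card (Finset.monotone_filter_right _ fun k _ => himp k))

theorem sub_le_sub_add_of_abs_sub_lt {f g : ℝ → ℝ} {a b δ : ℝ}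
    (ha : |f a - g a| < δ) (hb : |f b - g b| < δ) :
    g a - g b ≤ f a - f b + 2 * δ := by
  rw [abs_lt] at ha hb
  linarith

theorem statUpCont_of_forall_uniform_approx {g : ℝ → ℝ} {E : Set ℝ}
    (happrox : ∀ ε > 0, ∃ f : ℝ → ℝ, StatUpCont f E ∧ ∀ x ∈ E, |f x - g x| < ε) :
    StatUpCont g E := by
  intro x hx hqc ε hε
  obtain ⟨f, hf, hfg⟩ := happrox (ε / 3) (by positivity)
  refine (hf x hx hqc).tendsto_of_drop_imp (δ := ε / 3) (by positivity) fun k hk => ?_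
  have := sub_le_sub_add_of_abs_sub_lt (hfg _ (hx k)) (hfg _ (hx (k + 1)))
  linarith

theorem uniformLimit_statUpCont (f : ℕ → ℝ → ℝ) (g : ℝ → ℝ) (E : Set ℝ)
    (hf : ∀ n, StatUpCont (f n) E)
    (hunif : ∀ ε > (0:ℝ), ∃ N : ℕ, ∀ n ≥ N, ∀ x ∈ E, |f n x - g x| < ε) :
    StatUpCont g E := by
  refine statUpCont_of_forall_uniform_approx fun ε hε => ?_
  obtain ⟨N, hN⟩ := hunif ε hε
  exact ⟨f N, hf N, hN N le_rfl⟩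
end

section
/- If (f_n) is a sequence of statistically downward continuous functions on E ⊆ ℝ converging uniformly to f on E, then f is statistically downward continuous on E. -/
/-! If `|y n - x n| < ε / 3` for all `n`, every upward jump `x (k+1) - x k ≥ ε` forces a jump
`y (k+1) - y k ≥ ε / 3`, so the density of large jumps of `x` is dominated by that of `y`.
Hence statistically downward half quasi-Cauchy sequences are closed under uniform limits, and
`g ∘ x` is a uniform limit of the sequences `f N ∘ x`. -/

open Filter Topology

theorem tendsto_card_filter_range_div_of_imp {p q : ℕ → Prop} [DecidablePred p]
    [DecidablePred q] (hpq : ∀ k, p k → q k)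
    (hq : Tendsto (fun n => (((Finset.range n).filter q).card : ℝ) / n) atTop (𝓝 0)) :
    Tendsto (fun n => (((Finset.range n).filter p).card : ℝ) / n) atTop (𝓝 0) := by
  refine squeeze_zero (fun n => by positivity) (fun n => ?_) hq
  gcongr
  exact hpq _

theorem StatDownQC.of_forall_exists_abs_sub_lt {x : ℕ → ℝ}
    (h : ∀ δ > 0, ∃ y, StatDownQC y ∧ ∀ n, |y n - x n| < δ) : StatDownQC x := by
  intro ε hε
  obtain ⟨y, hy, hyx⟩ := h (ε / 3) (by positivity)
  refine tendsto_card_filter_range_div_of_imp (fun k hk => ?_) (hy (ε / 3) (by positivity))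
  have hk₁ := abs_lt.1 (hyx (k + 1))
  have hk₀ := abs_lt.1 (hyx k)
  linarith [hk₁.1, hk₀.2]

theorem uniformLimit_statDownCont (f : ℕ → ℝ → ℝ) (g : ℝ → ℝ) (E : Set ℝ)
    (hf : ∀ n, StatDownCont (f n) E)
    (hunif : ∀ ε > (0:ℝ), ∃ N : ℕ, ∀ n ≥ N, ∀ x ∈ E, |f n x - g x| < ε) :
    StatDownCont g E := by
  intro x hx hqc
  refine StatDownQC.of_forall_exists_abs_sub_lt fun δ hδ => ?_
  obtain ⟨N, hN⟩ := hunif δ hδ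
  exact ⟨fun n => f N (x n), hf N x hx hqc, fun n => hN N le_rfl (x n) (hx n)⟩
end
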